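/- arXiv:1103.2694 — 7 statements merged into one kernel-verified Lean document; each statement's English description precedes it below -/
import Mathlib

section
/- Let g be a finite-dimensional complex Lie algebra. The quotient vector space ZL²(g,ℂ)/(Z²(g,ℂ) ⊕ ZL²₀(g,ℂ)) is linearly isomorphic to Im I ∩ B³(g,ℂ). -/
noncomputable section

open Module

variable (L : Type*) [LieRing L] [LieAlgebra ℂ L]

/-- The trivial Leibniz coboundary, as a linear map on the space of all ℂ-valued
2-cochains. -/
def leibnizDC : (L → L → ℂ) →ₗ[ℂ] (L → L → L → ℂ) where
  toFun ψ := fun X Y Z => -ψ ⁅X, Y⁆ Z + ψ X ⁅Y, Z⁆ + ψ ⁅X, Z⁆ Y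
  map_add' a b := by
    funext X Y Z
    simp only [Pi.add_apply, neg_add]
    ring
  map_smul' c a := by
    funext X Y Z
    simp only [Pi.smul_apply, RingHom.id_apply, smul_eq_mul]
    ring

/-- The subspace of bilinear forms among all ℂ-valued 2-cochains. -/
def BilC : Submodule ℂ (L → L → ℂ) where
  carrier := {ψ | ∃ Ψ : L →ₗ[ℂ] L →ₗ[ℂ] ℂ, ∀ X Y : L, ψ X Y = Ψ X Y}
  add_mem' := by
    rintro a b ⟨A, hA⟩ ⟨B, hB⟩
    exact ⟨A + B, fun X Y => by simp [hA X Y, hB X Y]⟩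
  zero_mem' := ⟨0, by simp⟩
  smul_mem' := by
    rintro c a ⟨A, hA⟩
    exact ⟨c • A, fun X Y => by simp [hA X Y]⟩

/-- Alternating ℂ-valued 2-cochains. -/
def AltC : Submodule ℂ (L → L → ℂ) where
  carrier := {ψ | ∀ X Y : L, ψ X Y = - ψ Y X}
  add_mem' := by
    intro a b ha hb X Y
    simp only [Pi.add_apply, ha X Y, hb X Y, neg_add]
  zero_mem' := by simp
  smul_mem' := by
    intro c a ha X Y
    simp only [Pi.smul_apply, ha X Y, smul_neg]

/-- Symmetric ℂ-valued 2-cochains. -/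
def SymmC : Submodule ℂ (L → L → ℂ) where
  carrier := {ψ | ∀ X Y : L, ψ X Y = ψ Y X}
  add_mem' := by
    intro a b ha hb X Y
    simp only [Pi.add_apply, ha X Y, hb X Y]
  zero_mem' := by simp
  smul_mem' := by
    intro c a ha X Y
    simp only [Pi.smul_apply, ha X Y]

/-- Trivial Leibniz 2-cocycles: bilinear forms with vanishing trivial Leibniz coboundary. -/
def ZL2C : Submodule ℂ (L → L → ℂ) := BilC L ⊓ LinearMap.ker (leibnizDC L)

/-- Chevalley–Eilenberg (alternating) 2-cocycles with trivial coefficients. -/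
def Z2C : Submodule ℂ (L → L → ℂ) := ZL2C L ⊓ AltC L

/-- Symmetric trivial Leibniz 2-cocycles. -/
def ZL20C : Submodule ℂ (L → L → ℂ) := ZL2C L ⊓ SymmC L

/-- 2-coboundaries with trivial coefficients. -/
def B2C : Submodule ℂ (L → L → ℂ) where
  carrier := {ψ | ∃ f : L →ₗ[ℂ] ℂ, ∀ X Y : L, ψ X Y = - f ⁅X, Y⁆}
  add_mem' := by
    rintro a b ⟨f₁, h₁⟩ ⟨f₂, h₂⟩
    refine ⟨f₁ + f₂, fun X Y => ?_⟩
    simp only [Pi.add_apply, h₁ X Y, h₂ X Y, LinearMap.add_apply, neg_add]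
  zero_mem' := ⟨0, by simp⟩
  smul_mem' := by
    rintro c a ⟨f, h⟩
    refine ⟨c • f, fun X Y => ?_⟩
    simp only [Pi.smul_apply, h X Y, LinearMap.smul_apply, smul_neg]

/-- Chevalley–Eilenberg 3-coboundaries with trivial coefficients: trivial Leibniz
coboundaries of alternating bilinear 2-cochains (on which the Leibniz and
Chevalley–Eilenberg differentials coincide). -/
def B3C : Submodule ℂ (L → L → L → ℂ) := (BilC L ⊓ AltC L).map (leibnizDC L)

/-- The image `Im I` of the Koszul map: the space of trilinear forms spanned by
`(X,Y,Z) ↦ B([X,Y],Z)` with `B` an invariant symmetric bilinear form. -/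
def ImIC : Submodule ℂ (L → L → L → ℂ) :=
  Submodule.span ℂ {T | ∃ B : L →ₗ[ℂ] L →ₗ[ℂ] ℂ,
    (∀ X Y : L, B X Y = B Y X) ∧ (∀ X Y Z : L, B ⁅Z, X⁆ Y = - B X ⁅Z, Y⁆) ∧
    T = fun X Y Z => B ⁅X, Y⁆ Z}

/-- The kernel `ker I` of the Koszul map: invariant symmetric bilinear forms vanishing on
brackets. -/
def KerIC : Submodule ℂ (L → L → ℂ) where
  carrier := {ψ | ψ ∈ BilC L ∧ (∀ X Y : L, ψ X Y = ψ Y X) ∧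
    (∀ X Y Z : L, ψ ⁅Z, X⁆ Y = - ψ X ⁅Z, Y⁆) ∧ (∀ X Y Z : L, ψ ⁅X, Y⁆ Z = 0)}
  add_mem' := by
    rintro a b ⟨ha0, ha1, ha3, ha4⟩ ⟨hb0, hb1, hb3, hb4⟩
    refine ⟨add_mem ha0 hb0, fun X Y => ?_, fun X Y Z => ?_, fun X Y Z => ?_⟩
    · simp only [Pi.add_apply, ha1 X Y, hb1 X Y]
    · simp only [Pi.add_apply, ha3 X Y Z, hb3 X Y Z, neg_add]
    · simp only [Pi.add_apply, ha4 X Y Z, hb4 X Y Z, add_zero]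
  zero_mem' := ⟨zero_mem _, fun X Y => rfl, fun X Y Z => by simp, fun X Y Z => rfl⟩
  smul_mem' := by
    rintro c a ⟨h0, h1, h3, h4⟩
    refine ⟨Submodule.smul_mem _ _ h0, fun X Y => ?_, fun X Y Z => ?_, fun X Y Z => ?_⟩
    · simp only [Pi.smul_apply, h1 X Y]
    · simp only [Pi.smul_apply, h3 X Y Z, smul_neg]
    · simp only [Pi.smul_apply, h4 X Y Z, smul_zero]

namespace S3

variable {L : Type*} [LieRing L] [LieAlgebra ℂ L]

/-- The alternating-part projection on 2-cochains. -/
def altP : (L → L → ℂ) →ₗ[ℂ] (L → L → ℂ) where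
  toFun ψ := fun X Y => (2⁻¹ : ℂ) * (ψ X Y - ψ Y X)
  map_add' a b := by
    funext X Y
    simp only [Pi.add_apply]
    ring
  map_smul' c a := by
    funext X Y
    simp only [Pi.smul_apply, RingHom.id_apply, smul_eq_mul]
    ring

lemma cocycle_inv (Ψ : L →ₗ[ℂ] L →ₗ[ℂ] ℂ)
    (h : ∀ X Y Z : L, -Ψ ⁅X, Y⁆ Z + Ψ X ⁅Y, Z⁆ + Ψ ⁅X, Z⁆ Y = 0) :
    ∀ X Y Z : L, Ψ ⁅Z, X⁆ Y + Ψ Y ⁅Z, X⁆ = -(Ψ X ⁅Z, Y⁆ + Ψ ⁅Z, Y⁆ X) := by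
  intro X Y Z
  have h1 := h X Y Z
  have h2 := h Y Z X
  rw [show ⁅X, (Z : L)⁆ = -⁅Z, X⁆ from (lie_skew X Z).symm] at h1
  rw [show ⁅Y, (X : L)⁆ = -⁅X, Y⁆ from (lie_skew Y X).symm] at h2
  rw [show ⁅Z, (Y : L)⁆ = -⁅Y, Z⁆ from (lie_skew Z Y).symm]
  simp only [map_neg, LinearMap.neg_apply] at *
  linear_combination h2 - h1

/-- The image of the Koszul map, as a submodule (without taking a span). -/
def ImS : Submodule ℂ (L → L → L → ℂ) where
  carrier := {T | ∃ B : L →ₗ[ℂ] L →ₗ[ℂ] ℂ,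
    (∀ X Y : L, B X Y = B Y X) ∧ (∀ X Y Z : L, B ⁅Z, X⁆ Y = - B X ⁅Z, Y⁆) ∧
    T = fun X Y Z => B ⁅X, Y⁆ Z}
  add_mem' := by
    rintro a b ⟨A, hA1, hA2, rfl⟩ ⟨B, hB1, hB2, rfl⟩
    refine ⟨A + B, fun X Y => ?_, fun X Y Z => ?_, ?_⟩
    · simp [hA1 X Y, hB1 X Y]
    · simp only [LinearMap.add_apply]
      rw [hA2 X Y Z, hB2 X Y Z]; ring
    · funext X Y Z; simp
  zero_mem' := ⟨0, by simp, by simp, by funext X Y Z; simp⟩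
  smul_mem' := by
    rintro c a ⟨A, hA1, hA2, rfl⟩
    refine ⟨c • A, fun X Y => ?_, fun X Y Z => ?_, ?_⟩
    · simp [hA1 X Y]
    · simp only [LinearMap.smul_apply, smul_eq_mul]
      rw [hA2 X Y Z]; ring
    · funext X Y Z; simp

lemma ImIC_eq : ImIC L = (ImS : Submodule ℂ (L → L → L → ℂ)) := by
  apply le_antisymm
  · exact Submodule.span_le.mpr (fun T hT => hT)
  · exact fun T hT => Submodule.subset_span hT

/-- The main comparison map. -/
def Phi : ↥(ZL2C L) →ₗ[ℂ] (L → L → L → ℂ) :=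
  (leibnizDC L) ∘ₗ (altP ∘ₗ (ZL2C L).subtype)

lemma phi_apply (ψ : ↥(ZL2C L)) : Phi ψ = leibnizDC L (altP (ψ : L → L → ℂ)) := rfl

lemma mem_cocycle {ψ : L → L → ℂ} (Ψ : L →ₗ[ℂ] L →ₗ[ℂ] ℂ) (hΨ : ∀ X Y : L, ψ X Y = Ψ X Y)
    (hk : leibnizDC L ψ = 0) :
    ∀ X Y Z : L, -Ψ ⁅X, Y⁆ Z + Ψ X ⁅Y, Z⁆ + Ψ ⁅X, Z⁆ Y = 0 := by
  intro X Y Z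
  have := congrFun (congrFun (congrFun hk X) Y) Z
  simp only [leibnizDC, LinearMap.coe_mk, AddHom.coe_mk, Pi.zero_apply] at this
  rw [hΨ, hΨ, hΨ] at this
  exact this

lemma phi_mem (ψ : ↥(ZL2C L)) : Phi ψ ∈ ImIC L ⊓ B3C L := by
  obtain ⟨⟨Ψ, hΨ⟩, hk⟩ := ψ.2
  have hc := mem_cocycle Ψ hΨ (LinearMap.mem_ker.mp hk)
  rw [phi_apply]
  constructor
  · rw [ImIC_eq]
    refine ⟨(2⁻¹ : ℂ) • (Ψ + Ψ.flip), fun X Y => ?_, fun X Y Z => ?_, ?_⟩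
    · simp only [LinearMap.smul_apply, LinearMap.add_apply, LinearMap.flip_apply, smul_eq_mul]
      ring
    · simp only [LinearMap.smul_apply, LinearMap.add_apply, LinearMap.flip_apply, smul_eq_mul]
      linear_combination (2⁻¹ : ℂ) * cocycle_inv Ψ hc X Y Z
    · funext X Y Z
      have h1 := hc X Y Z
      have h2 := hc Y Z X
      rw [show ⁅Y, (X : L)⁆ = -⁅X, Y⁆ from (lie_skew Y X).symm,
        show ⁅Z, (X : L)⁆ = -⁅X, Z⁆ from (lie_skew Z X).symm] at h2
      simp only [map_neg, LinearMap.neg_apply] at h2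
      simp only [leibnizDC, altP, LinearMap.coe_mk, AddHom.coe_mk, LinearMap.smul_apply,
        LinearMap.add_apply, LinearMap.flip_apply, smul_eq_mul, hΨ]
      linear_combination (2⁻¹ : ℂ) * h1 + (2⁻¹ : ℂ) * h2
  · refine Submodule.mem_map.mpr ⟨altP (ψ : L → L → ℂ), ⟨⟨(2⁻¹ : ℂ) • (Ψ - Ψ.flip), fun X Y => ?_⟩, fun X Y => ?_⟩, rfl⟩
    · simp only [altP, LinearMap.coe_mk, AddHom.coe_mk, LinearMap.smul_apply,
        LinearMap.sub_apply, LinearMap.flip_apply, smul_eq_mul, hΨ]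
    · simp only [altP, LinearMap.coe_mk, AddHom.coe_mk]
      ring

lemma delta_symm_inv (B : L →ₗ[ℂ] L →ₗ[ℂ] ℂ) (sym : ∀ X Y : L, B X Y = B Y X)
    (inv : ∀ X Y Z : L, B ⁅Z, X⁆ Y = - B X ⁅Z, Y⁆) (X Y Z : L) :
    -B ⁅X, Y⁆ Z + B X ⁅Y, Z⁆ + B ⁅X, Z⁆ Y = -B ⁅X, Y⁆ Z := by
  have hv : B X ⁅Y, Z⁆ = B ⁅X, Y⁆ Z := by
    have h := inv X Z Y
    rw [show ⁅Y, (X : L)⁆ = -⁅X, Y⁆ from (lie_skew Y X).symm] at h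
    simp only [map_neg, LinearMap.neg_apply] at h
    linear_combination h
  have hw : B ⁅X, Z⁆ Y = -B ⁅X, Y⁆ Z := by
    have h := inv Y Z X
    have h2 := sym ⁅X, Z⁆ Y
    linear_combination h2 + h
  linear_combination hv + hw

lemma ker_eq :
    Submodule.comap (ZL2C L).subtype (Z2C L ⊔ ZL20C L) = LinearMap.ker (Phi (L := L)) := by
  ext ψ
  simp only [Submodule.mem_comap, LinearMap.mem_ker, Submodule.subtype_apply]
  constructor
  · intro h
    obtain ⟨a, ha, s, hs, hsum⟩ := Submodule.mem_sup.mp h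
    obtain ⟨ha1, ha2⟩ := Submodule.mem_inf.mp ha
    obtain ⟨hs1, hs2⟩ := Submodule.mem_inf.mp hs
    have haltP : altP (ψ : L → L → ℂ) = a := by
      funext X Y
      have h1 : (ψ : L → L → ℂ) X Y = a X Y + s X Y := by
        rw [← hsum]; rfl
      have h2 : (ψ : L → L → ℂ) Y X = a Y X + s Y X := by
        rw [← hsum]; rfl
      have ha' : a X Y = -a Y X := ha2 X Y
      have hs' : s X Y = s Y X := hs2 X Y
      simp only [altP, LinearMap.coe_mk, AddHom.coe_mk, h1, h2]
      rw [ha', hs']; ring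
    rw [phi_apply, haltP]
    exact LinearMap.mem_ker.mp (Submodule.mem_inf.mp ha1).2
  · intro h
    obtain ⟨⟨Ψ, hΨ⟩, hk⟩ := ψ.2
    have hk' : leibnizDC L (ψ : L → L → ℂ) = 0 := LinearMap.mem_ker.mp hk
    set a := altP (ψ : L → L → ℂ) with ha_def
    have haZ : a ∈ Z2C L := by
      refine Submodule.mem_inf.mpr ⟨Submodule.mem_inf.mpr ⟨⟨(2⁻¹ : ℂ) • (Ψ - Ψ.flip), fun X Y => ?_⟩, LinearMap.mem_ker.mpr ?_⟩, fun X Y => ?_⟩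
      · simp only [ha_def, altP, LinearMap.coe_mk, AddHom.coe_mk, LinearMap.smul_apply,
          LinearMap.sub_apply, LinearMap.flip_apply, smul_eq_mul, hΨ]
      · rw [← phi_apply]; exact h
      · simp only [ha_def, altP, LinearMap.coe_mk, AddHom.coe_mk]; ring
    have hsZ : (ψ : L → L → ℂ) - a ∈ ZL20C L := by
      refine Submodule.mem_inf.mpr ⟨Submodule.mem_inf.mpr ⟨⟨(2⁻¹ : ℂ) • (Ψ + Ψ.flip), fun X Y => ?_⟩, LinearMap.mem_ker.mpr ?_⟩, fun X Y => ?_⟩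
      · simp only [ha_def, altP, Pi.sub_apply, LinearMap.coe_mk, AddHom.coe_mk,
          LinearMap.smul_apply, LinearMap.add_apply, LinearMap.flip_apply, smul_eq_mul, hΨ]
        ring
      · rw [map_sub, hk', ← phi_apply, h, sub_zero]
      · simp only [ha_def, altP, Pi.sub_apply, LinearMap.coe_mk, AddHom.coe_mk]
        ring
    exact Submodule.mem_sup.mpr ⟨a, haZ, (ψ : L → L → ℂ) - a, hsZ, add_sub_cancel _ _⟩

lemma phi_surj (T : L → L → L → ℂ) (hT : T ∈ ImIC L ⊓ B3C L) :
    ∃ ψ : ↥(ZL2C L), Phi ψ = T := by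
  obtain ⟨hI, hB⟩ := hT
  rw [ImIC_eq] at hI
  obtain ⟨B, hB1, hB2, rfl⟩ := hI
  obtain ⟨a, haBA, hda⟩ := Submodule.mem_map.mp hB
  obtain ⟨⟨A, hA⟩, halt⟩ := Submodule.mem_inf.mp haBA
  set ψf : L → L → ℂ := a + fun X Y => B X Y with hψf
  have hmem : ψf ∈ ZL2C L := by
    refine Submodule.mem_inf.mpr ⟨⟨A + B, fun X Y => ?_⟩, LinearMap.mem_ker.mpr ?_⟩
    · simp only [hψf, Pi.add_apply, LinearMap.add_apply, hA X Y]
    · rw [hψf, map_add, hda]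
      funext X Y Z
      have hd : leibnizDC L (fun X Y => B X Y) X Y Z = -B ⁅X, Y⁆ Z :=
        delta_symm_inv B hB1 hB2 X Y Z
      simp only [Pi.add_apply, Pi.zero_apply, hd]
      ring
  refine ⟨⟨ψf, hmem⟩, ?_⟩
  rw [phi_apply]
  have haltP : altP ψf = a := by
    funext X Y
    have halt' : a X Y = -a Y X := halt X Y
    simp only [hψf, altP, LinearMap.coe_mk, AddHom.coe_mk, Pi.add_apply]
    rw [halt', hB1 X Y]; ring
  rw [haltP, hda]

end S3

/-- For a finite-dimensional complex Lie algebra,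
`ZL²(g,ℂ)/(Z²(g,ℂ) ⊕ ZL²₀(g,ℂ)) ≅ Im I ∩ B³(g,ℂ)`. -/
theorem stmt3 [FiniteDimensional ℂ L] :
    Nonempty ((↥(ZL2C L) ⧸ Submodule.comap (ZL2C L).subtype (Z2C L ⊔ ZL20C L)) ≃ₗ[ℂ]
      ↥(ImIC L ⊓ B3C L)) := by
  let Φ' := (S3.Phi (L := L)).codRestrict (ImIC L ⊓ B3C L) S3.phi_mem
  have hker : Submodule.comap (ZL2C L).subtype (Z2C L ⊔ ZL20C L) = LinearMap.ker Φ' := by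
    rw [S3.ker_eq]
    exact (LinearMap.ker_codRestrict _ _ _).symm
  have hsurj : Function.Surjective Φ' := by
    rintro ⟨T, hT⟩
    obtain ⟨ψ, hψ⟩ := S3.phi_surj T hT
    exact ⟨ψ, Subtype.ext hψ⟩
  exact ⟨(Submodule.quotEquivOfEq _ _ hker).trans (Φ'.quotKerEquivOfSurjective hsurj)⟩
end
end

section
/- Let g be a finite-dimensional complex Lie algebra. Then HL²(g,ℂ) is linearly isomorphic to the direct sum H²(g,ℂ) ⊕ ker I ⊕ (Im I ∩ B³(g,ℂ)). -/
/-!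
Symmetrization `ψ ↦ (ψ + ψᵀ)/2` maps `ZL²(g,ℂ)` with kernel `Z²(g,ℂ)` onto the space `S` of
invariant symmetric forms `s` with `I_s ∈ B³(g,ℂ)`: for a Leibniz cocycle `ψ` the symmetric part
is invariant and `δ(alternating part) = I(symmetric part)`, because `δ s = -I_s` for every
invariant symmetric `s`; conversely `s + ω` is a Leibniz cocycle with symmetric part `s` whenever
`δ ω = I_s`. The Koszul map restricted to `S` has kernel `ker I` and image `Im I ∩ B³(g,ℂ)`.
Counting dimensions, with `B²(g,ℂ) ⊆ Z²(g,ℂ)` on both sides, gives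
`dim HL² = dim H² + dim ker I + dim (Im I ∩ B³)`.
-/

noncomputable section

open Module

variable (L : Type*) [LieRing L] [LieAlgebra ℂ L]

section LinearAlgebra

variable {K V W : Type*} [DivisionRing K] [AddCommGroup V] [Module K V] [AddCommGroup W]
  [Module K W]

theorem Submodule.finrank_quotient_comap_subtype_add_finrank {p q : Submodule K V} (h : p ≤ q)
    [FiniteDimensional K q] :
    finrank K (q ⧸ p.comap q.subtype) + finrank K p = finrank K q := by
  rw [← (Submodule.comapSubtypeEquivOfLe h).finrank_eq]
  exact Submodule.finrank_quotient_add_finrank _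

theorem Submodule.finrank_map_add_finrank_inf_ker (f : V →ₗ[K] W) (p : Submodule K V)
    [FiniteDimensional K p] :
    finrank K (p.map f) + finrank K ↥(p ⊓ LinearMap.ker f) = finrank K p := by
  have h := LinearMap.finrank_range_add_finrank_ker (f.domRestrict p)
  rwa [LinearMap.range_domRestrict, LinearMap.ker_domRestrict,
    ← Submodule.finrank_map_subtype_eq, Submodule.map_comap_subtype] at h

end LinearAlgebra

section Symmetrization

variable {α : Type*}

def symPart : (α → α → ℂ) →ₗ[ℂ] (α → α → ℂ) where
  toFun ψ X Y := 2⁻¹ * (ψ X Y + ψ Y X)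
  map_add' a b := by
    funext X Y
    simp only [Pi.add_apply]
    ring
  map_smul' c a := by
    funext X Y
    simp only [Pi.smul_apply, RingHom.id_apply, smul_eq_mul]
    ring

def altPart : (α → α → ℂ) →ₗ[ℂ] (α → α → ℂ) where
  toFun ψ X Y := 2⁻¹ * (ψ X Y - ψ Y X)
  map_add' a b := by
    funext X Y
    simp only [Pi.add_apply]
    ring
  map_smul' c a := by
    funext X Y
    simp only [Pi.smul_apply, RingHom.id_apply, smul_eq_mul]
    ring

theorem symPart_apply (ψ : α → α → ℂ) (X Y : α) : symPart ψ X Y = 2⁻¹ * (ψ X Y + ψ Y X) := rfl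

theorem altPart_apply (ψ : α → α → ℂ) (X Y : α) : altPart ψ X Y = 2⁻¹ * (ψ X Y - ψ Y X) := rfl

theorem symPart_add_altPart (ψ : α → α → ℂ) : symPart ψ + altPart ψ = ψ := by
  funext X Y
  simp only [Pi.add_apply, symPart_apply, altPart_apply]
  ring

theorem symPart_mem_SymmC (ψ : α → α → ℂ) : symPart ψ ∈ SymmC α := by
  intro X Y
  simp only [symPart_apply, add_comm]

theorem altPart_mem_AltC (ψ : α → α → ℂ) : altPart ψ ∈ AltC α := by
  intro X Y
  simp only [altPart_apply]
  ring

theorem symPart_eq_self {ψ : α → α → ℂ} (hψ : ψ ∈ SymmC α) : symPart ψ = ψ := by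
  funext X Y
  rw [symPart_apply, ← hψ X Y]
  ring

theorem ker_symPart : LinearMap.ker (symPart (α := α)) = AltC α := by
  ext ψ
  simp only [LinearMap.mem_ker, funext_iff, symPart_apply, Pi.zero_apply]
  constructor
  · intro h X Y
    linear_combination 2 * h X Y
  · intro h X Y
    rw [h X Y]
    ring

end Symmetrization

def InvC : Submodule ℂ (L → L → ℂ) where
  carrier := {ψ | ∀ X Y Z : L, ψ ⁅Z, X⁆ Y = -ψ X ⁅Z, Y⁆}
  add_mem' := by
    intro a b ha hb X Y Z
    simp only [Pi.add_apply, ha X Y Z, hb X Y Z, neg_add]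
  zero_mem' := by simp
  smul_mem' := by
    intro c a ha X Y Z
    simp only [Pi.smul_apply, ha X Y Z, smul_neg]

def InvSymmC : Submodule ℂ (L → L → ℂ) := BilC L ⊓ SymmC L ⊓ InvC L

def koszulC : (L → L → ℂ) →ₗ[ℂ] (L → L → L → ℂ) where
  toFun ψ X Y Z := ψ ⁅X, Y⁆ Z
  map_add' _ _ := rfl
  map_smul' _ _ := rfl

section Cocycles

variable {L}

theorem leibnizDC_apply {M : Type*} [LieRing M] (ψ : M → M → ℂ) (X Y Z : M) :
    leibnizDC M ψ X Y Z = -ψ ⁅X, Y⁆ Z + ψ X ⁅Y, Z⁆ + ψ ⁅X, Z⁆ Y := rfl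

theorem koszulC_apply {M : Type*} [LieRing M] (ψ : M → M → ℂ) (X Y Z : M) :
    koszulC M ψ X Y Z = ψ ⁅X, Y⁆ Z := rfl

theorem apply_lie_swap_left_of_mem_BilC {ψ : L → L → ℂ} (hψ : ψ ∈ BilC L) (X Y Z : L) :
    ψ ⁅Y, X⁆ Z = -ψ ⁅X, Y⁆ Z := by
  obtain ⟨Ψ, hΨ⟩ := hψ
  rw [hΨ, hΨ, ← lie_skew Y X, map_neg, LinearMap.neg_apply]

theorem symPart_mem_BilC {ψ : L → L → ℂ} (hψ : ψ ∈ BilC L) : symPart ψ ∈ BilC L := by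
  obtain ⟨Ψ, hΨ⟩ := hψ
  exact ⟨(2⁻¹ : ℂ) • (Ψ + Ψ.flip), fun X Y => by simp [symPart_apply, hΨ, mul_add]⟩

theorem altPart_mem_BilC {ψ : L → L → ℂ} (hψ : ψ ∈ BilC L) : altPart ψ ∈ BilC L := by
  obtain ⟨Ψ, hΨ⟩ := hψ
  exact ⟨(2⁻¹ : ℂ) • (Ψ - Ψ.flip), fun X Y => by simp [altPart_apply, hΨ, mul_sub]⟩

theorem apply_lie_left_of_mem_ZL2C {ψ : L → L → ℂ} (hψ : ψ ∈ ZL2C L) (X Y Z : L) :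
    ψ ⁅X, Y⁆ Z = ψ X ⁅Y, Z⁆ + ψ ⁅X, Z⁆ Y := by
  have h := congrFun (congrFun (congrFun (LinearMap.mem_ker.mp hψ.2) X) Y) Z
  rw [leibnizDC_apply, Pi.zero_apply, Pi.zero_apply, Pi.zero_apply] at h
  linear_combination -h

theorem symPart_mem_InvC_of_mem_ZL2C {ψ : L → L → ℂ} (hψ : ψ ∈ ZL2C L) : symPart ψ ∈ InvC L := by
  intro X Y Z
  have hXZY := apply_lie_left_of_mem_ZL2C hψ X Z Y
  have hYZX := apply_lie_left_of_mem_ZL2C hψ Y Z X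
  have hXY := apply_lie_swap_left_of_mem_BilC hψ.1 X Y Z
  have hXZ := apply_lie_swap_left_of_mem_BilC hψ.1 Z X Y
  have hYZ := apply_lie_swap_left_of_mem_BilC hψ.1 Z Y X
  simp only [symPart_apply]
  linear_combination (2⁻¹ : ℂ) * (hXZ + hYZ - hXY - hXZY - hYZX)

theorem leibnizDC_eq_neg_koszulC {ψ : L → L → ℂ} (hψ : ψ ∈ InvSymmC L) :
    leibnizDC L ψ = -koszulC L ψ := by
  obtain ⟨⟨hbil, hsymm⟩, hinv⟩ := hψ
  funext X Y Z
  have h₁ : ψ X ⁅Y, Z⁆ = ψ Z ⁅X, Y⁆ := by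
    rw [← neg_neg (ψ X ⁅Y, Z⁆), ← hinv, apply_lie_swap_left_of_mem_BilC hbil, neg_neg, hsymm]
  have h₂ : ψ ⁅X, Z⁆ Y = -ψ Z ⁅X, Y⁆ := hinv Z Y X
  rw [leibnizDC_apply, Pi.neg_apply, Pi.neg_apply, Pi.neg_apply, koszulC_apply, h₁, h₂]
  ring

theorem leibnizDC_altPart_of_mem_ZL2C {ψ : L → L → ℂ} (hψ : ψ ∈ ZL2C L) :
    leibnizDC L (altPart ψ) = koszulC L (symPart ψ) := by
  have hsymm : symPart ψ ∈ InvSymmC L :=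
    ⟨⟨symPart_mem_BilC hψ.1, symPart_mem_SymmC ψ⟩, symPart_mem_InvC_of_mem_ZL2C hψ⟩
  rw [← sub_eq_of_eq_add' (symPart_add_altPart ψ).symm, map_sub, LinearMap.mem_ker.mp hψ.2,
    leibnizDC_eq_neg_koszulC hsymm, zero_sub, neg_neg]

theorem map_symPart_ZL2C :
    (ZL2C L).map symPart = InvSymmC L ⊓ (B3C L).comap (koszulC L) := by
  apply le_antisymm
  · rintro _ ⟨ψ, hψ, rfl⟩
    refine ⟨⟨⟨symPart_mem_BilC hψ.1, symPart_mem_SymmC ψ⟩, symPart_mem_InvC_of_mem_ZL2C hψ⟩, ?_⟩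
    exact ⟨altPart ψ, ⟨altPart_mem_BilC hψ.1, altPart_mem_AltC ψ⟩, leibnizDC_altPart_of_mem_ZL2C hψ⟩
  · rintro s ⟨hs, ω, ⟨hωbil, hωalt⟩, hω⟩
    refine ⟨s + ω, ⟨add_mem hs.1.1 hωbil, LinearMap.mem_ker.mpr ?_⟩, ?_⟩
    · rw [map_add, hω, leibnizDC_eq_neg_koszulC hs, neg_add_cancel]
    · rw [map_add, symPart_eq_self hs.1.2, LinearMap.mem_ker.mp (ker_symPart.ge hωalt),
        add_zero]

theorem map_koszulC_InvSymmC : (InvSymmC L).map (koszulC L) = ImIC L := by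
  rw [ImIC, ← Submodule.span_eq ((InvSymmC L).map (koszulC L))]
  congr 1
  ext T
  constructor
  · rintro ⟨ψ, ⟨⟨⟨Ψ, hΨ⟩, hsymm⟩, hinv⟩, rfl⟩
    refine ⟨Ψ, fun X Y => ?_, fun X Y Z => ?_, ?_⟩
    · rw [← hΨ, ← hΨ, hsymm]
    · rw [← hΨ, ← hΨ, hinv]
    · funext X Y Z
      exact hΨ _ Z
  · rintro ⟨B, hsymm, hinv, rfl⟩
    exact ⟨fun X Y => B X Y, ⟨⟨⟨B, fun _ _ => rfl⟩, hsymm⟩, hinv⟩, rfl⟩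

theorem KerIC_eq : KerIC L = InvSymmC L ⊓ LinearMap.ker (koszulC L) := by
  ext ψ
  simp only [Submodule.mem_inf, LinearMap.mem_ker, funext_iff]
  exact ⟨fun ⟨hbil, hsymm, hinv, hker⟩ => ⟨⟨⟨hbil, hsymm⟩, hinv⟩, hker⟩,
    fun ⟨⟨⟨hbil, hsymm⟩, hinv⟩, hker⟩ => ⟨hbil, hsymm, hinv, hker⟩⟩

theorem B2C_le_Z2C : B2C L ≤ Z2C L := by
  rintro ψ ⟨f, hf⟩
  refine ⟨⟨⟨-(LinearMap.llcomp ℂ L L ℂ f ∘ₗ (LieAlgebra.ad ℂ L : L →ₗ[ℂ] Module.End ℂ L)),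
    fun X Y => by simp [hf]⟩, LinearMap.mem_ker.mpr ?_⟩, fun X Y => ?_⟩
  · funext X Y Z
    rw [leibnizDC_apply, hf, hf, hf, ← lie_skew ⁅X, Z⁆ Y, lie_lie]
    simp only [map_sub, map_neg, Pi.zero_apply]
    ring
  · rw [hf, hf, ← lie_skew X Y, map_neg, neg_neg]

theorem map_koszulC_map_symPart_ZL2C :
    ((ZL2C L).map symPart).map (koszulC L) = ImIC L ⊓ B3C L := by
  rw [map_symPart_ZL2C, ← Submodule.map_inf_eq_map_inf_comap, map_koszulC_InvSymmC]

theorem map_symPart_ZL2C_inf_ker_koszulC :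
    (ZL2C L).map symPart ⊓ LinearMap.ker (koszulC L) = KerIC L := by
  rw [map_symPart_ZL2C, inf_right_comm, KerIC_eq]
  exact inf_eq_left.mpr (inf_le_right.trans (LinearMap.ker_le_comap _))

theorem ZL2C_inf_ker_symPart : ZL2C L ⊓ LinearMap.ker symPart = Z2C L := by
  rw [ker_symPart]
  rfl

end Cocycles

section FiniteDimensional

variable {L} [FiniteDimensional ℂ L]

instance BilC.finiteDimensional : FiniteDimensional ℂ (BilC L) := by
  let coe : (L →ₗ[ℂ] L →ₗ[ℂ] ℂ) →ₗ[ℂ] (L → L → ℂ) :=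
    { toFun := fun Ψ X Y => Ψ X Y, map_add' := fun _ _ => rfl, map_smul' := fun _ _ => rfl }
  have hrange : BilC L = LinearMap.range coe := by
    ext ψ
    exact ⟨fun ⟨Ψ, hΨ⟩ => ⟨Ψ, funext₂ fun X Y => (hΨ X Y).symm⟩,
      fun ⟨Ψ, hΨ⟩ => ⟨Ψ, fun X Y => by rw [← hΨ]; rfl⟩⟩
  rw [hrange]
  infer_instance

instance ZL2C.finiteDimensional : FiniteDimensional ℂ (ZL2C L) :=
  Submodule.finiteDimensional_of_le inf_le_left

instance Z2C.finiteDimensional : FiniteDimensional ℂ (Z2C L) :=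
  Submodule.finiteDimensional_of_le inf_le_left

instance KerIC.finiteDimensional : FiniteDimensional ℂ (KerIC L) :=
  Submodule.finiteDimensional_of_le fun _ h => h.1

instance B3C.finiteDimensional : FiniteDimensional ℂ (B3C L) :=
  inferInstanceAs (FiniteDimensional ℂ ((BilC L ⊓ AltC L).map (leibnizDC L)))

end FiniteDimensional

/-- For a finite-dimensional complex Lie algebra,
`HL²(g,ℂ) ≅ H²(g,ℂ) ⊕ ker I ⊕ (Im I ∩ B³(g,ℂ))`. -/
theorem stmt5 [FiniteDimensional ℂ L] :
    Nonempty ((↥(ZL2C L) ⧸ Submodule.comap (ZL2C L).subtype (B2C L)) ≃ₗ[ℂ]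
      ((↥(Z2C L) ⧸ Submodule.comap (Z2C L).subtype (B2C L)) ×
        ↥(KerIC L) × ↥(ImIC L ⊓ B3C L))) := by
  have hZL2 := Submodule.finrank_map_add_finrank_inf_ker symPart (ZL2C L)
  rw [ZL2C_inf_ker_symPart] at hZL2
  have hS := Submodule.finrank_map_add_finrank_inf_ker (koszulC L) ((ZL2C L).map symPart)
  rw [map_koszulC_map_symPart_ZL2C, map_symPart_ZL2C_inf_ker_koszulC] at hS
  have hB2 : B2C L ≤ Z2C L := B2C_le_Z2C
  have hHL2 := Submodule.finrank_quotient_comap_subtype_add_finrank (hB2.trans inf_le_left)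
  have hH2 := Submodule.finrank_quotient_comap_subtype_add_finrank hB2
  refine ⟨LinearEquiv.ofFinrankEq _ _ ?_⟩
  rw [Module.finrank_prod, Module.finrank_prod]
  omega
end
end

section
/- Let g be a finite-dimensional complex Lie algebra and let ψ: g×g→g be an adjoint Leibniz 2-cocycle (δψ = 0). Let ψ₀(X,Y) = (ψ(X,Y) + ψ(Y,X))/2 be its symmetric part. Then: (1) ψ₀ takes values in the center of g; (2) ψ₀ is invariant, i.e. ψ₀([Z,X],Y) = −ψ₀(X,[Z,Y]) for all X,Y,Z; and (3) (δψ₀)(X,Y,Z) = −ψ₀([X,Y],Z) for all X,Y,Z ∈ g. -/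
/-- If `ψ` is an adjoint Leibniz 2-cocycle of a finite-dimensional complex
Lie algebra and `ψ₀(X,Y) = (ψ(X,Y) + ψ(Y,X))/2` is its symmetric part, then `ψ₀` is
center-valued, invariant, and `(δψ₀)(X,Y,Z) = −ψ₀([X,Y],Z)`. -/
theorem stmt6 (L : Type*) [LieRing L] [LieAlgebra ℂ L] [FiniteDimensional ℂ L]
    (ψ : L →ₗ[ℂ] L →ₗ[ℂ] L)
    (hψ : ∀ X Y Z : L,
      ⁅X, ψ Y Z⁆ + ⁅ψ X Z, Y⁆ - ⁅ψ X Y, Z⁆ - ψ ⁅X, Y⁆ Z + ψ X ⁅Y, Z⁆ + ψ ⁅X, Z⁆ Y = 0)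
    (ψ₀ : L → L → L) (hdef : ∀ X Y : L, ψ₀ X Y = (2⁻¹ : ℂ) • (ψ X Y + ψ Y X)) :
    (∀ X Y : L, ψ₀ X Y ∈ LieAlgebra.center ℂ L) ∧
    (∀ X Y Z : L, ψ₀ ⁅Z, X⁆ Y = - ψ₀ X ⁅Z, Y⁆) ∧
    (∀ X Y Z : L,
      ⁅X, ψ₀ Y Z⁆ + ⁅ψ₀ X Z, Y⁆ - ⁅ψ₀ X Y, Z⁆ - ψ₀ ⁅X, Y⁆ Z + ψ₀ X ⁅Y, Z⁆ + ψ₀ ⁅X, Z⁆ Y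
        = - ψ₀ ⁅X, Y⁆ Z) := by
  -- The symmetrized map lands in the center: ⁅X, ψ Y Z + ψ Z Y⁆ = 0.
  have h1 : ∀ X Y Z : L, ⁅X, ψ Y Z + ψ Z Y⁆ = 0 := by
    intro X Y Z
    have c : (⁅X, ψ Y Z⁆ + ⁅ψ X Z, Y⁆ - ⁅ψ X Y, Z⁆ - ψ ⁅X, Y⁆ Z + ψ X ⁅Y, Z⁆ + ψ ⁅X, Z⁆ Y)
        + (⁅X, ψ Z Y⁆ + ⁅ψ X Y, Z⁆ - ⁅ψ X Z, Y⁆ - ψ ⁅X, Z⁆ Y + ψ X ⁅Z, Y⁆ + ψ ⁅X, Y⁆ Z)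
        = 0 := by rw [hψ X Y Z, hψ X Z Y]; simp
    have hsym : ψ X ⁅Y, Z⁆ + ψ X ⁅Z, Y⁆ = 0 := by
      rw [← map_add]
      have : ⁅Y, Z⁆ + ⁅Z, Y⁆ = (0 : L) := by
        rw [← lie_skew Y Z]; abel
      rw [this, map_zero]
    rw [lie_add]
    calc ⁅X, ψ Y Z⁆ + ⁅X, ψ Z Y⁆
        = (⁅X, ψ Y Z⁆ + ⁅ψ X Z, Y⁆ - ⁅ψ X Y, Z⁆ - ψ ⁅X, Y⁆ Z + ψ X ⁅Y, Z⁆ + ψ ⁅X, Z⁆ Y)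
        + (⁅X, ψ Z Y⁆ + ⁅ψ X Y, Z⁆ - ⁅ψ X Z, Y⁆ - ψ ⁅X, Z⁆ Y + ψ X ⁅Z, Y⁆ + ψ ⁅X, Y⁆ Z)
        - (ψ X ⁅Y, Z⁆ + ψ X ⁅Z, Y⁆) := by abel
      _ = 0 := by rw [c, hsym]; simp
  -- Invariance of the symmetrized map.
  have h2 : ∀ X Y Z : L,
      (ψ ⁅X, Z⁆ Y + ψ Y ⁅X, Z⁆) + (ψ X ⁅Y, Z⁆ + ψ ⁅Y, Z⁆ X) = 0 := by
    intro X Y Z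
    have c : (⁅X, ψ Y Z⁆ + ⁅ψ X Z, Y⁆ - ⁅ψ X Y, Z⁆ - ψ ⁅X, Y⁆ Z + ψ X ⁅Y, Z⁆ + ψ ⁅X, Z⁆ Y)
        + (⁅Y, ψ X Z⁆ + ⁅ψ Y Z, X⁆ - ⁅ψ Y X, Z⁆ - ψ ⁅Y, X⁆ Z + ψ Y ⁅X, Z⁆ + ψ ⁅Y, Z⁆ X)
        = 0 := by rw [hψ X Y Z, hψ Y X Z]; simp
    have e1 : ⁅X, ψ Y Z⁆ + ⁅ψ Y Z, X⁆ = 0 := by rw [← lie_skew X (ψ Y Z)]; abel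
    have e2 : ⁅ψ X Z, Y⁆ + ⁅Y, ψ X Z⁆ = 0 := by rw [← lie_skew Y (ψ X Z)]; abel
    have e3 : ⁅ψ X Y, Z⁆ + ⁅ψ Y X, Z⁆ = 0 := by
      rw [← lie_skew (ψ X Y) Z, ← lie_skew (ψ Y X) Z, ← neg_add, ← lie_add,
        h1 Z X Y, neg_zero]
    have e4 : ψ ⁅X, Y⁆ Z + ψ ⁅Y, X⁆ Z = 0 := by
      rw [← LinearMap.add_apply, ← map_add]
      have : ⁅X, Y⁆ + ⁅Y, X⁆ = (0 : L) := by rw [← lie_skew X Y]; abel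
      rw [this]; simp
    calc (ψ ⁅X, Z⁆ Y + ψ Y ⁅X, Z⁆) + (ψ X ⁅Y, Z⁆ + ψ ⁅Y, Z⁆ X)
        = ((⁅X, ψ Y Z⁆ + ⁅ψ X Z, Y⁆ - ⁅ψ X Y, Z⁆ - ψ ⁅X, Y⁆ Z + ψ X ⁅Y, Z⁆ + ψ ⁅X, Z⁆ Y)
          + (⁅Y, ψ X Z⁆ + ⁅ψ Y Z, X⁆ - ⁅ψ Y X, Z⁆ - ψ ⁅Y, X⁆ Z + ψ Y ⁅X, Z⁆ + ψ ⁅Y, Z⁆ X))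
          - (⁅X, ψ Y Z⁆ + ⁅ψ Y Z, X⁆) - (⁅ψ X Z, Y⁆ + ⁅Y, ψ X Z⁆)
          + (⁅ψ X Y, Z⁆ + ⁅ψ Y X, Z⁆) + (ψ ⁅X, Y⁆ Z + ψ ⁅Y, X⁆ Z) := by abel
      _ = 0 := by rw [c, e1, e2, e3, e4]; simp
  -- ψ₀ is center-valued.
  have hc : ∀ X Y : L, ψ₀ X Y ∈ LieAlgebra.center ℂ L := by
    intro X Y
    rw [LieModule.mem_maxTrivSubmodule]
    intro W
    rw [hdef, lie_smul, h1 W X Y, smul_zero]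
  -- ψ₀ invariance, in the convenient form ψ₀([X,Z],Y) + ψ₀(X,[Y,Z]) = 0.
  have hinv : ∀ X Y Z : L, ψ₀ ⁅X, Z⁆ Y + ψ₀ X ⁅Y, Z⁆ = 0 := by
    intro X Y Z
    rw [hdef, hdef, ← smul_add]
    have : (ψ ⁅X, Z⁆ Y + ψ Y ⁅X, Z⁆) + (ψ X ⁅Y, Z⁆ + ψ ⁅Y, Z⁆ X) = 0 := h2 X Y Z
    rw [this, smul_zero]
  refine ⟨hc, ?_, ?_⟩
  · intro X Y Z
    have := hinv X Y Z
    -- ψ₀ ⁅Z, X⁆ Y = - ψ₀ X ⁅Z, Y⁆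
    have hZX : ψ₀ ⁅Z, X⁆ Y = - ψ₀ ⁅X, Z⁆ Y := by
      rw [hdef, hdef, ← lie_skew X Z]
      simp only [map_neg, LinearMap.neg_apply]
      module
    have hZY : ψ₀ X ⁅Z, Y⁆ = - ψ₀ X ⁅Y, Z⁆ := by
      rw [hdef, hdef, ← lie_skew Y Z]
      simp only [map_neg, LinearMap.neg_apply]
      module
    rw [hZX, hZY, neg_neg]
    have : ψ₀ ⁅X, Z⁆ Y = - ψ₀ X ⁅Y, Z⁆ := by
      rw [eq_neg_iff_add_eq_zero]; exact hinv X Y Z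
    rw [this, neg_neg]
  · intro X Y Z
    have c1 : ⁅X, ψ₀ Y Z⁆ = 0 := by
      rw [hdef, lie_smul, h1 X Y Z, smul_zero]
    have c2 : ⁅ψ₀ X Z, Y⁆ = 0 := by
      rw [← lie_skew (ψ₀ X Z) Y, hdef, lie_smul, h1 Y X Z, smul_zero, neg_zero]
    have c3 : ⁅ψ₀ X Y, Z⁆ = 0 := by
      rw [← lie_skew (ψ₀ X Y) Z, hdef, lie_smul, h1 Z X Y, smul_zero, neg_zero]
    have c4 : ψ₀ X ⁅Y, Z⁆ + ψ₀ ⁅X, Z⁆ Y = 0 := by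
      have := hinv X Y Z; linear_combination (norm := abel) this
    rw [c1, c2, c3]
    calc (0 : L) + 0 - 0 - ψ₀ ⁅X, Y⁆ Z + ψ₀ X ⁅Y, Z⁆ + ψ₀ ⁅X, Z⁆ Y
        = (ψ₀ X ⁅Y, Z⁆ + ψ₀ ⁅X, Z⁆ Y) - ψ₀ ⁅X, Y⁆ Z := by abel
      _ = - ψ₀ ⁅X, Y⁆ Z := by rw [c4]; abel
end

section
/- Let g be a finite-dimensional complex Lie algebra. Then HL²(g,ℂ) is linearly isomorphic to H²(g,ℂ) ⊕ ker I if and only if g is trivial ZL²-uncoupling, i.e. Im I ∩ B³(g,ℂ) = {0}. -/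
noncomputable section

open Module

variable (L : Type*) [LieRing L] [LieAlgebra ℂ L]

set_option linter.unusedSectionVars false

namespace Stmt9Aux

variable {L}

lemma leibnizDC_apply (ψ : L → L → ℂ) (X Y Z : L) :
    leibnizDC L ψ X Y Z = -ψ ⁅X, Y⁆ Z + ψ X ⁅Y, Z⁆ + ψ ⁅X, Z⁆ Y := rfl

/-- The symmetrization operator on 2-cochains. -/
def Smap : (L → L → ℂ) →ₗ[ℂ] (L → L → ℂ) where
  toFun ψ := fun X Y => (2⁻¹ : ℂ) * (ψ X Y + ψ Y X)
  map_add' a b := by funext X Y; simp only [Pi.add_apply]; ring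
  map_smul' c a := by
    funext X Y; simp only [Pi.smul_apply, RingHom.id_apply, smul_eq_mul]; ring

lemma Smap_apply (ψ : L → L → ℂ) (X Y : L) :
    Smap ψ X Y = (2⁻¹ : ℂ) * (ψ X Y + ψ Y X) := rfl

lemma Smap_symm (ψ : L → L → ℂ) (X Y : L) : Smap ψ X Y = Smap ψ Y X := by
  rw [Smap_apply, Smap_apply]; ring

lemma Smap_mem_BilC {ψ : L → L → ℂ} (hψ : ψ ∈ BilC L) : Smap ψ ∈ BilC L := by
  obtain ⟨Ψ, hΨ⟩ := hψ
  refine ⟨(2⁻¹ : ℂ) • (Ψ + Ψ.flip), fun X Y => ?_⟩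
  simp [Smap_apply, LinearMap.flip_apply, hΨ, smul_eq_mul, mul_add]

lemma Smap_eq_self {ψ : L → L → ℂ} (h : ∀ X Y, ψ X Y = ψ Y X) : Smap ψ = ψ := by
  funext X Y; rw [Smap_apply, ← h X Y]; ring

lemma Smap_eq_zero {ψ : L → L → ℂ} (h : ∀ X Y, ψ X Y = -ψ Y X) : Smap ψ = 0 := by
  funext X Y
  show (2⁻¹ : ℂ) * (ψ X Y + ψ Y X) = 0
  rw [h X Y]; ring

lemma alt_of_Smap_eq_zero {ψ : L → L → ℂ} (h : Smap ψ = 0) : ∀ X Y, ψ X Y = -ψ Y X := by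
  intro X Y
  have h1 := congrFun (congrFun h X) Y
  rw [Smap_apply] at h1
  simp only [Pi.zero_apply] at h1
  have h2 : ψ X Y + ψ Y X = 0 :=
    (mul_eq_zero.mp h1).resolve_left (by norm_num)
  linear_combination h2

lemma bil_skew₁ {ψ : L → L → ℂ} (hψ : ψ ∈ BilC L) (X Y Z : L) :
    ψ ⁅Y, X⁆ Z = -ψ ⁅X, Y⁆ Z := by
  obtain ⟨Ψ, hΨ⟩ := hψ
  rw [hΨ, hΨ, ← lie_skew X Y, map_neg, LinearMap.neg_apply, neg_neg]

lemma bil_skew₂ {ψ : L → L → ℂ} (hψ : ψ ∈ BilC L) (X Y Z : L) :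
    ψ X ⁅Z, Y⁆ = -ψ X ⁅Y, Z⁆ := by
  obtain ⟨Ψ, hΨ⟩ := hψ
  rw [hΨ, hΨ, ← lie_skew Y Z, map_neg, neg_neg]

lemma cocycleE {ψ : L → L → ℂ} (hb : ψ ∈ BilC L) (hc : leibnizDC L ψ = 0) (X Y Z : L) :
    ψ X ⁅Y, Z⁆ + ψ ⁅X, Z⁆ Y + ψ Y ⁅X, Z⁆ + ψ ⁅Y, Z⁆ X = 0 := by
  have h0 : ∀ X Y Z : L, -ψ ⁅X, Y⁆ Z + ψ X ⁅Y, Z⁆ + ψ ⁅X, Z⁆ Y = 0 := fun X Y Z => by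
    have h := congrFun (congrFun (congrFun hc X) Y) Z
    simpa [leibnizDC_apply] using h
  have e1 := h0 X Y Z
  have e2 := h0 Y X Z
  have hsk := bil_skew₁ hb X Y Z
  linear_combination e1 + e2 + hsk

lemma Smap_invariant {ψ : L → L → ℂ} (hb : ψ ∈ BilC L) (hc : leibnizDC L ψ = 0)
    (X Y Z : L) : Smap ψ ⁅Z, X⁆ Y = -Smap ψ X ⁅Z, Y⁆ := by
  have e1 := cocycleE hb hc Z Y X
  have e2 := cocycleE hb hc X Z Y
  have s1 := bil_skew₂ hb Z X Y
  have s2 := bil_skew₁ hb X Y Z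
  rw [Smap_apply, Smap_apply]
  linear_combination (2⁻¹ : ℂ) * (e1 + e2 - s1 - s2)

lemma delta_inv_symm {s : L → L → ℂ} (hb : s ∈ BilC L) (hsym : ∀ X Y, s X Y = s Y X)
    (hinv : ∀ X Y Z : L, s ⁅Z, X⁆ Y = -s X ⁅Z, Y⁆) :
    leibnizDC L s = fun X Y Z => -s ⁅X, Y⁆ Z := by
  funext X Y Z
  rw [leibnizDC_apply]
  have h1 := hinv X Z Y
  have h2 := hinv Z Y X
  have h3 := hsym Z ⁅X, Y⁆
  have h4 := bil_skew₁ hb X Y Z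
  linear_combination h1 - h4 + h2 - h3

lemma mem_ZL2C_iff {ψ : L → L → ℂ} : ψ ∈ ZL2C L ↔ ψ ∈ BilC L ∧ leibnizDC L ψ = 0 := by
  rw [ZL2C, Submodule.mem_inf, LinearMap.mem_ker]

lemma KerIC_le_ZL2C : KerIC L ≤ ZL2C L := by
  rintro s ⟨hbil, hsym, hinv, hvan⟩
  refine mem_ZL2C_iff.mpr ⟨hbil, ?_⟩
  funext X Y Z
  have h1 : s X ⁅Y, Z⁆ = 0 := by rw [hsym]; exact hvan Y Z X
  simp [leibnizDC_apply, hvan, h1]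

lemma B2C_mem_AltC {ψ : L → L → ℂ} (hψ : ψ ∈ B2C L) : ψ ∈ AltC L := by
  obtain ⟨f, hf⟩ := hψ
  intro X Y
  rw [hf, hf, ← lie_skew X Y, map_neg]

lemma B2C_le_Z2C : B2C L ≤ Z2C L := by
  rintro ψ hψ
  obtain ⟨f, hf⟩ := hψ
  have hbil : ψ ∈ BilC L := by
    refine ⟨LinearMap.mk₂ ℂ (fun X Y => -f ⁅X, Y⁆)
      (fun m₁ m₂ n => by simp [add_lie]; ring)
      (fun c m n => by simp [smul_lie])
      (fun m n₁ n₂ => by simp [lie_add]; ring)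
      (fun c m n => by simp [lie_smul]), fun X Y => ?_⟩
    rw [hf]; rfl
  have hcoc : leibnizDC L ψ = 0 := by
    funext X Y Z
    simp only [leibnizDC_apply, hf, Pi.zero_apply]
    rw [lie_lie, (lie_skew ⁅X, Z⁆ Y).symm, map_sub, map_neg]
    ring
  exact Submodule.mem_inf.mpr ⟨mem_ZL2C_iff.mpr ⟨hbil, hcoc⟩, B2C_mem_AltC ⟨f, hf⟩⟩

/-- The image of the Koszul map, with its explicit carrier. -/
def ImIC' : Submodule ℂ (L → L → L → ℂ) where
  carrier := {T | ∃ B : L →ₗ[ℂ] L →ₗ[ℂ] ℂ,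
    (∀ X Y : L, B X Y = B Y X) ∧ (∀ X Y Z : L, B ⁅Z, X⁆ Y = - B X ⁅Z, Y⁆) ∧
    T = fun X Y Z => B ⁅X, Y⁆ Z}
  add_mem' := by
    rintro a b ⟨A, hA1, hA2, rfl⟩ ⟨B, hB1, hB2, rfl⟩
    refine ⟨A + B, fun X Y => by simp [hA1 X Y, hB1 X Y],
      fun X Y Z => by simp only [LinearMap.add_apply, hA2 X Y Z, hB2 X Y Z]; ring, ?_⟩
    funext X Y Z; simp
  zero_mem' := ⟨0, by simp, by simp, by funext X Y Z; simp⟩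
  smul_mem' := by
    rintro c a ⟨A, hA1, hA2, rfl⟩
    refine ⟨c • A, fun X Y => by simp [hA1 X Y],
      fun X Y Z => by simp only [LinearMap.smul_apply, hA2 X Y Z, smul_eq_mul]; ring, ?_⟩
    funext X Y Z; simp

lemma ImIC_eq : ImIC L = ImIC' (L := L) := by
  apply le_antisymm
  · exact Submodule.span_le.mpr (fun T hT => hT)
  · exact fun T hT => Submodule.subset_span hT

/-- Realizing bilinear forms as functions. -/
def toFun2 : (L →ₗ[ℂ] L →ₗ[ℂ] ℂ) →ₗ[ℂ] (L → L → ℂ) where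
  toFun Ψ := fun X Y => Ψ X Y
  map_add' a b := by funext X Y; simp
  map_smul' c a := by funext X Y; simp

lemma BilC_eq_range : BilC L = LinearMap.range (toFun2 (L := L)) := by
  ext ψ
  constructor
  · rintro ⟨Ψ, hΨ⟩; exact ⟨Ψ, by funext X Y; exact (hΨ X Y).symm⟩
  · rintro ⟨Ψ, rfl⟩; exact ⟨Ψ, fun X Y => rfl⟩

/-- The symmetrization map restricted to trivial Leibniz 2-cocycles. -/
def sigma' : ↥(ZL2C L) →ₗ[ℂ] (L → L → ℂ) := Smap ∘ₗ (ZL2C L).subtype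

lemma sigma'_apply (ψ : ↥(ZL2C L)) : sigma' ψ = Smap (ψ : L → L → ℂ) := rfl

lemma sigma'_ker : LinearMap.ker (sigma' (L := L)) = Submodule.comap (ZL2C L).subtype (Z2C L) := by
  ext ψ
  simp only [LinearMap.mem_ker, Submodule.mem_comap, sigma'_apply, Submodule.subtype_apply]
  constructor
  · intro h
    exact Submodule.mem_inf.mpr ⟨ψ.2, alt_of_Smap_eq_zero h⟩
  · intro h
    exact Smap_eq_zero fun X Y => (Submodule.mem_inf.mp h).2 X Y

lemma KerIC_le_range : KerIC L ≤ LinearMap.range (sigma' (L := L)) := by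
  intro s hs
  refine ⟨⟨s, KerIC_le_ZL2C hs⟩, ?_⟩
  exact Smap_eq_self hs.2.1

lemma range_le_BilC : LinearMap.range (sigma' (L := L)) ≤ BilC L := by
  rintro s ⟨ψ, rfl⟩
  exact Smap_mem_BilC ψ.2.1

lemma range_le_KerIC (h : ImIC L ⊓ B3C L = ⊥) :
    LinearMap.range (sigma' (L := L)) ≤ KerIC L := by
  rintro s ⟨⟨ψ, hψ⟩, rfl⟩
  obtain ⟨hb, hc⟩ := mem_ZL2C_iff.mp hψ
  show Smap ψ ∈ KerIC L
  have hsb : Smap ψ ∈ BilC L := Smap_mem_BilC hb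
  have hsym : ∀ X Y, Smap ψ X Y = Smap ψ Y X := Smap_symm ψ
  have hinv := Smap_invariant hb hc
  refine ⟨hsb, hsym, hinv, ?_⟩
  obtain ⟨B, hB⟩ := hsb
  have hB1 : ∀ X Y, B X Y = B Y X := fun X Y => by rw [← hB, ← hB]; exact hsym X Y
  have hB2 : ∀ X Y Z : L, B ⁅Z, X⁆ Y = -B X ⁅Z, Y⁆ := fun X Y Z => by
    rw [← hB, ← hB]; exact hinv X Y Z
  have hTI : (fun X Y Z => B ⁅X, Y⁆ Z) ∈ ImIC L := by
    rw [ImIC_eq]; exact ⟨B, hB1, hB2, rfl⟩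
  have hδs : leibnizDC L (Smap ψ) = fun X Y Z => -Smap ψ ⁅X, Y⁆ Z :=
    delta_inv_symm ⟨B, hB⟩ hsym hinv
  have ha : ψ - Smap ψ ∈ BilC L ⊓ AltC L := by
    refine Submodule.mem_inf.mpr ⟨sub_mem hb (Smap_mem_BilC hb), fun X Y => ?_⟩
    show ψ X Y - Smap ψ X Y = -(ψ Y X - Smap ψ Y X)
    rw [Smap_apply, Smap_apply]; ring
  have hTB : (fun X Y Z => B ⁅X, Y⁆ Z) ∈ B3C L := by
    refine ⟨ψ - Smap ψ, ha, ?_⟩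
    rw [map_sub, hc, hδs]
    funext X Y Z
    simp [← hB]
  have hT0 : (fun X Y Z => B ⁅X, Y⁆ Z) = (0 : L → L → L → ℂ) := by
    have hmem := Submodule.mem_inf.mpr ⟨hTI, hTB⟩
    rw [h] at hmem
    simpa using hmem
  intro X Y Z
  rw [hB]
  exact congrFun (congrFun (congrFun hT0 X) Y) Z

end Stmt9Aux
set_option synthInstance.maxHeartbeats 1000000
set_option maxHeartbeats 2000000
/-- `HL²(g,ℂ) ≅ H²(g,ℂ) ⊕ ker I` iff `g` is trivial `ZL²`-uncoupling,
i.e. `Im I ∩ B³(g,ℂ) = {0}`. -/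
theorem stmt9 [FiniteDimensional ℂ L] :
    Nonempty ((↥(ZL2C L) ⧸ Submodule.comap (ZL2C L).subtype (B2C L)) ≃ₗ[ℂ]
        ((↥(Z2C L) ⧸ Submodule.comap (Z2C L).subtype (B2C L)) × ↥(KerIC L))) ↔
      ImIC L ⊓ B3C L = ⊥ := by
  have hZL2_le : ZL2C L ≤ BilC L := inf_le_left
  have hZ2_le : Z2C L ≤ ZL2C L := inf_le_left
  have hB2_le : B2C L ≤ Z2C L := Stmt9Aux.B2C_le_Z2C
  haveI hFDB : FiniteDimensional ℂ ↥(BilC L) := by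
    rw [Stmt9Aux.BilC_eq_range]; infer_instance
  haveI : FiniteDimensional ℂ ↥(ZL2C L) := Submodule.finiteDimensional_of_le hZL2_le
  haveI : FiniteDimensional ℂ ↥(Z2C L) :=
    Submodule.finiteDimensional_of_le (hZ2_le.trans hZL2_le)
  haveI : FiniteDimensional ℂ ↥(B2C L) :=
    Submodule.finiteDimensional_of_le ((hB2_le.trans hZ2_le).trans hZL2_le)
  haveI : FiniteDimensional ℂ ↥(KerIC L) :=
    Submodule.finiteDimensional_of_le (S₂ := BilC L) (fun s hs => hs.1)
  haveI : FiniteDimensional ℂ ↥(LinearMap.range (Stmt9Aux.sigma' (L := L))) :=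
    Submodule.finiteDimensional_of_le Stmt9Aux.range_le_BilC
  constructor
  · rintro ⟨e⟩
    have he := e.finrank_eq
    rw [Module.finrank_prod] at he
    have h1 := Submodule.finrank_quotient_add_finrank (Submodule.comap (ZL2C L).subtype (B2C L))
    have h2 := Submodule.finrank_quotient_add_finrank (Submodule.comap (Z2C L).subtype (B2C L))
    have h3 := LinearMap.finrank_range_add_finrank_ker (Stmt9Aux.sigma' (L := L))
    have h4 : finrank ℂ ↥(LinearMap.ker (Stmt9Aux.sigma' (L := L))) = finrank ℂ ↥(Z2C L) := by
      rw [Stmt9Aux.sigma'_ker]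
      exact (Submodule.comapSubtypeEquivOfLe hZ2_le).finrank_eq
    have h5 : finrank ℂ ↥(Submodule.comap (ZL2C L).subtype (B2C L)) = finrank ℂ ↥(B2C L) :=
      (Submodule.comapSubtypeEquivOfLe (hB2_le.trans hZ2_le)).finrank_eq
    have h6 : finrank ℂ ↥(Submodule.comap (Z2C L).subtype (B2C L)) = finrank ℂ ↥(B2C L) :=
      (Submodule.comapSubtypeEquivOfLe hB2_le).finrank_eq
    have hrk : finrank ℂ ↥(KerIC L) = finrank ℂ ↥(LinearMap.range (Stmt9Aux.sigma' (L := L))) := by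
      omega
    have hEq : KerIC L = LinearMap.range (Stmt9Aux.sigma' (L := L)) :=
      Submodule.eq_of_le_of_finrank_eq Stmt9Aux.KerIC_le_range hrk
    rw [eq_bot_iff]
    rintro t ht
    obtain ⟨htI, htB⟩ := Submodule.mem_inf.mp ht
    rw [Stmt9Aux.ImIC_eq] at htI
    obtain ⟨B, hB1, hB2, rfl⟩ := htI
    obtain ⟨a, haBA, hat⟩ := htB
    obtain ⟨hab, haalt⟩ := Submodule.mem_inf.mp haBA
    have hsb : (fun X Y => B X Y) ∈ BilC L := ⟨B, fun _ _ => rfl⟩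
    have hδs := Stmt9Aux.delta_inv_symm hsb hB1 hB2
    have hψZ : a + (fun X Y => B X Y) ∈ ZL2C L := by
      refine Stmt9Aux.mem_ZL2C_iff.mpr ⟨add_mem hab hsb, ?_⟩
      rw [map_add, hat, hδs]
      funext X Y Z
      simp
    have hsK : (fun X Y => B X Y) ∈ KerIC L := by
      rw [hEq]
      refine ⟨⟨a + (fun X Y => B X Y), hψZ⟩, ?_⟩
      show Stmt9Aux.Smap (a + fun X Y => B X Y) = fun X Y => B X Y
      rw [map_add, Stmt9Aux.Smap_eq_zero haalt, Stmt9Aux.Smap_eq_self hB1, zero_add]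
    rw [Submodule.mem_bot]
    funext X Y Z
    show B ⁅X, Y⁆ Z = 0
    exact hsK.2.2.2 X Y Z
  · intro h
    have hTK : ∀ ψ : ↥(ZL2C L), Stmt9Aux.sigma' ψ ∈ KerIC L := fun ψ =>
      Stmt9Aux.range_le_KerIC h ⟨ψ, rfl⟩
    have halt : ∀ ψ : ↥(ZL2C L),
        ((ZL2C L).subtype - Stmt9Aux.sigma' (L := L)) ψ ∈ Z2C L := by
      intro ψ
      refine Submodule.mem_inf.mpr
        ⟨sub_mem ψ.2 (Stmt9Aux.KerIC_le_ZL2C (hTK ψ)), fun X Y => ?_⟩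
      show (ψ : L → L → ℂ) X Y - Stmt9Aux.Smap (ψ : L → L → ℂ) X Y =
        -((ψ : L → L → ℂ) Y X - Stmt9Aux.Smap (ψ : L → L → ℂ) Y X)
      rw [Stmt9Aux.Smap_apply, Stmt9Aux.Smap_apply]; ring
    let A : ↥(ZL2C L) →ₗ[ℂ] ↥(Z2C L) :=
      LinearMap.codRestrict (Z2C L) ((ZL2C L).subtype - Stmt9Aux.sigma') halt
    let K : ↥(ZL2C L) →ₗ[ℂ] ↥(KerIC L) :=
      LinearMap.codRestrict (KerIC L) Stmt9Aux.sigma' hTK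
    let φ : ↥(ZL2C L) →ₗ[ℂ]
        ((↥(Z2C L) ⧸ Submodule.comap (Z2C L).subtype (B2C L)) × ↥(KerIC L)) :=
      LinearMap.prod ((Submodule.comap (Z2C L).subtype (B2C L)).mkQ.comp A) K
    have hker : LinearMap.ker φ = Submodule.comap (ZL2C L).subtype (B2C L) := by
      ext ψ
      simp only [LinearMap.mem_ker, Submodule.mem_comap, Submodule.subtype_apply]
      constructor
      · intro h0
        have h0' := Prod.ext_iff.mp h0
        have hs0 : Stmt9Aux.Smap (ψ : L → L → ℂ) = 0 := congrArg Subtype.val h0'.2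
        have hq : ((ψ : L → L → ℂ) - Stmt9Aux.Smap (ψ : L → L → ℂ)) ∈ B2C L := by
          have h1 : Submodule.Quotient.mk (A ψ) =
              (0 : ↥(Z2C L) ⧸ Submodule.comap (Z2C L).subtype (B2C L)) := h0'.1
          rw [Submodule.Quotient.mk_eq_zero] at h1
          exact h1
        rw [hs0, sub_zero] at hq
        exact hq
      · intro hmem
        have hs0 : Stmt9Aux.Smap (ψ : L → L → ℂ) = 0 :=
          Stmt9Aux.Smap_eq_zero (Stmt9Aux.B2C_mem_AltC hmem)
        have hq : Submodule.Quotient.mk (A ψ) =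
            (0 : ↥(Z2C L) ⧸ Submodule.comap (Z2C L).subtype (B2C L)) := by
          rw [Submodule.Quotient.mk_eq_zero]
          show ((ψ : L → L → ℂ) - Stmt9Aux.Smap (ψ : L → L → ℂ)) ∈ B2C L
          rw [hs0, sub_zero]; exact hmem
        exact Prod.ext_iff.mpr ⟨hq, Subtype.ext hs0⟩
    have hsurj : Function.Surjective φ := by
      rintro ⟨q, s⟩
      obtain ⟨a, rfl⟩ := Submodule.Quotient.mk_surjective _ q
      have hmem : (a : L → L → ℂ) + (s : L → L → ℂ) ∈ ZL2C L :=
        add_mem (hZ2_le a.2) (Stmt9Aux.KerIC_le_ZL2C s.2)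
      refine ⟨⟨(a : L → L → ℂ) + (s : L → L → ℂ), hmem⟩, ?_⟩
      have hSa : Stmt9Aux.Smap (a : L → L → ℂ) = 0 :=
        Stmt9Aux.Smap_eq_zero (fun X Y => (Submodule.mem_inf.mp a.2).2 X Y)
      have hSs : Stmt9Aux.Smap (s : L → L → ℂ) = (s : L → L → ℂ) :=
        Stmt9Aux.Smap_eq_self s.2.2.1
      have hS : Stmt9Aux.Smap ((a : L → L → ℂ) + (s : L → L → ℂ)) = (s : L → L → ℂ) := by
        rw [map_add, hSa, hSs, zero_add]
      refine Prod.ext_iff.mpr ⟨?_, Subtype.ext hS⟩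
      show Submodule.Quotient.mk _ = Submodule.Quotient.mk a
      congr 1
      apply Subtype.ext
      show ((a : L → L → ℂ) + (s : L → L → ℂ)) -
          Stmt9Aux.Smap ((a : L → L → ℂ) + (s : L → L → ℂ)) = (a : L → L → ℂ)
      rw [hS, add_sub_cancel_right]
    exact ⟨(Submodule.quotEquivOfEq _ _ hker.symm).trans
      (φ.quotKerEquivOfSurjective hsurj)⟩
end
end

section
/- Let H_N be the (2N+1)-dimensional complex Heisenberg Lie algebra (N ≥ 1) with basis x₁,…,x_{2N+1} and nonzero brackets [x_i, x_{N+i}] = x_{2N+1} = −[x_{N+i}, x_i] for 1 ≤ i ≤ N, all other brackets of basis vectors being zero. Then H_N is I-null: every invariant symmetric bilinear form B on H_N satisfies B([X,Y],Z) = 0 for all X,Y,Z ∈ H_N. -/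
/-!
If every bracket is a multiple of one bracket `z = ⁅a, b⁆` (as in the Heisenberg algebra,
with `z` the central basis vector), then for an invariant symmetric form `B`,
`B z w = -B b ⁅a, w⁆` is a multiple of `B b z = B ⁅a, b⁆ b`, and the latter equals its own
negative by invariance and symmetry. Hence `B z = 0`, and so `B ⁅X, Y⁆ = 0`.
-/

namespace LinearMap.BilinForm

variable {R L : Type*} [CommRing R] [LieRing L] [LieAlgebra R L] {B : LinearMap.BilinForm R L}

theorem lieInvariant.apply_lie_self [NoZeroDivisors R] [NeZero (2 : R)]
    (hB : B.IsSymm) (hBinv : B.lieInvariant L) (a b : L) : B ⁅a, b⁆ b = 0 := by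
  have h : B ⁅a, b⁆ b = -B ⁅a, b⁆ b := (hBinv a b b).trans (by rw [hB.eq])
  have h2 : (2 : R) * B ⁅a, b⁆ b = 0 := by linear_combination h
  exact (mul_eq_zero.mp h2).resolve_left two_ne_zero

theorem lieInvariant.apply_lie_eq_zero_of_lie_mem_span_singleton [NoZeroDivisors R]
    [NeZero (2 : R)] (hB : B.IsSymm) (hBinv : B.lieInvariant L) {a b : L}
    (hspan : ∀ X Y : L, ⁅X, Y⁆ ∈ R ∙ ⁅a, b⁆) (X Y Z : L) : B ⁅X, Y⁆ Z = 0 := by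
  have hz : ∀ w, B ⁅a, b⁆ w = 0 := by
    intro w
    obtain ⟨c, hc⟩ := Submodule.mem_span_singleton.mp (hspan a w)
    rw [hBinv, ← hc, map_smul, hB.eq, hBinv.apply_lie_self hB, smul_zero, neg_zero]
  obtain ⟨c, hc⟩ := Submodule.mem_span_singleton.mp (hspan X Y)
  rw [← hc, map_smul, LinearMap.smul_apply, hz, smul_zero]

end LinearMap.BilinForm

theorem LieAlgebra.lie_mem_of_basis {R L ι : Type*} [CommRing R] [LieRing L] [LieAlgebra R L]
    (b : Module.Basis ι R L) (S : Submodule R L) (h : ∀ i j, ⁅b i, b j⁆ ∈ S) (X Y : L) :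
    ⁅X, Y⁆ ∈ S := by
  let bracket : L →ₗ[R] L →ₗ[R] L ⧸ S :=
    (LinearMap.mk₂ R (fun X Y : L => ⁅X, Y⁆) add_lie smul_lie lie_add lie_smul).compr₂ S.mkQ
  have hzero : bracket = 0 :=
    LinearMap.ext_basis b b fun i j => (Submodule.Quotient.mk_eq_zero S).mpr (h i j)
  exact (Submodule.Quotient.mk_eq_zero S).mp (LinearMap.congr_fun₂ hzero X Y)

theorem stmt13_general (N : ℕ) (hN : 1 ≤ N) (H : Type*) [LieRing H] [LieAlgebra ℂ H]
    (x : Module.Basis (Fin (2 * N + 1)) ℂ H)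
    (hbr : ∀ i j : Fin (2 * N + 1), ⁅x i, x j⁆ =
      if i.1 < N ∧ j.1 = i.1 + N then x (Fin.last (2 * N))
      else if j.1 < N ∧ i.1 = j.1 + N then -x (Fin.last (2 * N))
      else 0) :
    ∀ B : H →ₗ[ℂ] H →ₗ[ℂ] ℂ, (∀ X Y : H, B X Y = B Y X) →
      (∀ X Y Z : H, B ⁅Z, X⁆ Y = - B X ⁅Z, Y⁆) →
      ∀ X Y Z : H, B ⁅X, Y⁆ Z = 0 := by
  intro B hsymm hinv
  have hcentre : ⁅x ⟨0, by omega⟩, x ⟨N, by omega⟩⁆ = x (Fin.last (2 * N)) := by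
    rw [hbr, if_pos ⟨hN, (zero_add N).symm⟩]
  have hspan : ∀ X Y : H, ⁅X, Y⁆ ∈ ℂ ∙ ⁅x ⟨0, by omega⟩, x ⟨N, by omega⟩⁆ := by
    refine LieAlgebra.lie_mem_of_basis x _ fun i j => ?_
    rw [hcentre, hbr]
    split_ifs
    · exact Submodule.mem_span_singleton_self _
    · exact neg_mem (Submodule.mem_span_singleton_self _)
    · exact zero_mem _
  exact LinearMap.BilinForm.lieInvariant.apply_lie_eq_zero_of_lie_mem_span_singleton
    ⟨hsymm⟩ (fun Z X Y => hinv X Y Z) hspan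

/-- The `(2N+1)`-dimensional complex Heisenberg Lie algebra (`N ≥ 1`),
with basis `x₀, …, x_{2N}` and nonzero brackets `⁅x i, x (N+i)⁆ = x (2N) = -⁅x (N+i), x i⁆`
for `0 ≤ i < N`, is `I`-null: every invariant symmetric bilinear form `B` satisfies
`B([X,Y],Z) = 0`. -/
theorem stmt13 (N : ℕ) (hN : 1 ≤ N) (H : Type*) [LieRing H] [LieAlgebra ℂ H]
    [FiniteDimensional ℂ H] (x : Module.Basis (Fin (2 * N + 1)) ℂ H)
    (hbr : ∀ i j : Fin (2 * N + 1), ⁅x i, x j⁆ =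
      if i.1 < N ∧ j.1 = i.1 + N then x (Fin.last (2 * N))
      else if j.1 < N ∧ i.1 = j.1 + N then -x (Fin.last (2 * N))
      else 0) :
    ∀ B : H →ₗ[ℂ] H →ₗ[ℂ] ℂ, (∀ X Y : H, B X Y = B Y X) →
      (∀ X Y Z : H, B ⁅Z, X⁆ Y = - B X ⁅Z, Y⁆) →
      ∀ X Y Z : H, B ⁅X, Y⁆ Z = 0 :=
  stmt13_general N hN H x hbr
end

section
/- The 4-dimensional complex diamond Lie algebra d with basis x₁,x₂,x₃,x₄ and nonzero brackets [x₁,x₂] = x₃, [x₁,x₃] = −x₂, [x₂,x₃] = x₄ (and anticommutativity) is I-exact: for every invariant symmetric bilinear form B on d, the alternating trilinear form I_B(X,Y,Z) = B([X,Y],Z) is a Chevalley–Eilenberg 3-coboundary, i.e. I_B ∈ B³(d,ℂ). -/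
noncomputable section

open Module

variable (L : Type*) [LieRing L] [LieAlgebra ℂ L]

set_option maxHeartbeats 4000000 in
/-- The 4-dimensional complex diamond Lie algebra (basis `x₁,…,x₄`,
nonzero brackets `[x₁,x₂] = x₃`, `[x₁,x₃] = −x₂`, `[x₂,x₃] = x₄`, written 0-indexed
below) is `I`-exact: for every invariant symmetric bilinear form `B`, the Koszul form
`I_B(X,Y,Z) = B([X,Y],Z)` is a Chevalley–Eilenberg 3-coboundary. -/
theorem stmt17 [FiniteDimensional ℂ L] (x : Basis (Fin 4) ℂ L)
    (hbr : ∀ i j : Fin 4, ⁅x i, x j⁆ =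
      if i = 0 ∧ j = 1 then x 2 else if i = 1 ∧ j = 0 then -x 2
      else if i = 0 ∧ j = 2 then -x 1 else if i = 2 ∧ j = 0 then x 1
      else if i = 1 ∧ j = 2 then x 3 else if i = 2 ∧ j = 1 then -x 3
      else 0) :
    ∀ B : L →ₗ[ℂ] L →ₗ[ℂ] ℂ, (∀ X Y : L, B X Y = B Y X) →
      (∀ X Y Z : L, B ⁅Z, X⁆ Y = - B X ⁅Z, Y⁆) →
      (fun X Y Z => B ⁅X, Y⁆ Z) ∈ B3C L := by
  intro B hsymm hinv
  -- concrete bracket values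
  have br00 : ⁅x 0, x 0⁆ = 0 := by simp [hbr]
  have br01 : ⁅x 0, x 1⁆ = x 2 := by simp [hbr]
  have br02 : ⁅x 0, x 2⁆ = -x 1 := by simp [hbr]
  have br03 : ⁅x 0, x 3⁆ = 0 := by simp [hbr]
  have br10 : ⁅x 1, x 0⁆ = -x 2 := by simp [hbr]
  have br11 : ⁅x 1, x 1⁆ = 0 := by simp [hbr]
  have br12 : ⁅x 1, x 2⁆ = x 3 := by simp [hbr]
  have br13 : ⁅x 1, x 3⁆ = 0 := by simp [hbr]
  have br20 : ⁅x 2, x 0⁆ = x 1 := by simp [hbr]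
  have br21 : ⁅x 2, x 1⁆ = -x 3 := by simp [hbr]
  have br22 : ⁅x 2, x 2⁆ = 0 := by simp [hbr]
  have br23 : ⁅x 2, x 3⁆ = 0 := by simp [hbr]
  have br30 : ⁅x 3, x 0⁆ = 0 := by simp [hbr]
  have br31 : ⁅x 3, x 1⁆ = 0 := by simp [hbr]
  have br32 : ⁅x 3, x 2⁆ = 0 := by simp [hbr]
  have br33 : ⁅x 3, x 3⁆ = 0 := by simp [hbr]
  -- values of B on the basis
  have h01 : B (x 0) (x 1) = 0 := by
    have h := hinv (x 0) (x 0) (x 2)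
    rw [br20] at h
    linear_combination (h + hsymm (x 0) (x 1)) / 2
  have h02 : B (x 0) (x 2) = 0 := by
    have h := hinv (x 0) (x 0) (x 1)
    rw [br10] at h
    simp only [map_neg, LinearMap.neg_apply] at h
    linear_combination (-h - hsymm (x 2) (x 0)) / 2
  have h12 : B (x 1) (x 2) = 0 := by
    have h := hinv (x 1) (x 1) (x 0)
    rw [br01] at h
    linear_combination (h + hsymm (x 1) (x 2)) / 2
  have h13 : B (x 1) (x 3) = 0 := by
    have h := hinv (x 2) (x 3) (x 0)
    rw [br02, br03] at h
    simp only [map_neg, LinearMap.neg_apply, map_zero, neg_zero] at h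
    linear_combination -h
  have h23 : B (x 2) (x 3) = 0 := by
    have h := hinv (x 1) (x 3) (x 0)
    rw [br01, br03] at h
    simpa using h
  have h33 : B (x 3) (x 3) = 0 := by
    have h := hinv (x 2) (x 3) (x 1)
    rw [br12, br13] at h
    simpa using h
  have h22 : B (x 2) (x 2) = B (x 1) (x 1) := by
    have h := hinv (x 1) (x 2) (x 0)
    rw [br01, br02] at h
    simp only [map_neg, LinearMap.neg_apply, neg_neg] at h
    linear_combination h
  have h03 : B (x 0) (x 3) = B (x 1) (x 1) := by
    have h := hinv (x 0) (x 1) (x 2)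
    rw [br20, br21] at h
    simp only [map_neg, LinearMap.neg_apply, neg_neg] at h
    linear_combination -h
  have h10 : B (x 1) (x 0) = 0 := (hsymm _ _).trans h01
  have h20 : B (x 2) (x 0) = 0 := (hsymm _ _).trans h02
  have h21 : B (x 2) (x 1) = 0 := (hsymm _ _).trans h12
  have h31 : B (x 3) (x 1) = 0 := (hsymm _ _).trans h13
  have h32 : B (x 3) (x 2) = 0 := (hsymm _ _).trans h23
  have h30 : B (x 3) (x 0) = B (x 1) (x 1) := (hsymm _ _).trans h03
  -- the potential
  set t : ℂ := B (x 1) (x 1) with ht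
  set ψ : L → L → ℂ :=
    fun X Y => t * (x.coord 0 X * x.coord 3 Y - x.coord 3 X * x.coord 0 Y) with hψ
  refine Submodule.mem_map.mpr ⟨ψ, Submodule.mem_inf.mpr ⟨⟨LinearMap.mk₂ ℂ ψ ?_ ?_ ?_ ?_,
    fun X Y => rfl⟩, fun X Y => by simp only [hψ]; ring⟩, ?_⟩
  · intro m₁ m₂ n; simp only [hψ, map_add]; ring
  · intro c m n; simp only [hψ, map_smul, smul_eq_mul]; ring
  · intro m n₁ n₂; simp only [hψ, map_add]; ring
  · intro c m n; simp only [hψ, map_smul, smul_eq_mul]; ring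
  -- the coboundary computation
  funext X Y Z
  have hX : X = x.repr X 0 • x 0 + x.repr X 1 • x 1 + x.repr X 2 • x 2 + x.repr X 3 • x 3 := by
    have h := x.sum_repr X; rw [Fin.sum_univ_four] at h; exact h.symm
  have hY : Y = x.repr Y 0 • x 0 + x.repr Y 1 • x 1 + x.repr Y 2 • x 2 + x.repr Y 3 • x 3 := by
    have h := x.sum_repr Y; rw [Fin.sum_univ_four] at h; exact h.symm
  have hZ : Z = x.repr Z 0 • x 0 + x.repr Z 1 • x 1 + x.repr Z 2 • x 2 + x.repr Z 3 • x 3 := by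
    have h := x.sum_repr Z; rw [Fin.sum_univ_four] at h; exact h.symm
  have c00 : x.coord 0 (x 0) = 1 := by simp [Basis.coord_apply]
  have c01 : x.coord 0 (x 1) = 0 := by simp [Basis.coord_apply, Basis.repr_self_apply]
  have c02 : x.coord 0 (x 2) = 0 := by simp [Basis.coord_apply, Basis.repr_self_apply]
  have c03 : x.coord 0 (x 3) = 0 := by simp [Basis.coord_apply, Basis.repr_self_apply]
  have c30 : x.coord 3 (x 0) = 0 := by simp [Basis.coord_apply, Basis.repr_self_apply]
  have c31 : x.coord 3 (x 1) = 0 := by simp [Basis.coord_apply, Basis.repr_self_apply]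
  have c32 : x.coord 3 (x 2) = 0 := by simp [Basis.coord_apply, Basis.repr_self_apply]
  have c33 : x.coord 3 (x 3) = 1 := by simp [Basis.coord_apply]
  show -ψ ⁅X, Y⁆ Z + ψ X ⁅Y, Z⁆ + ψ ⁅X, Z⁆ Y = B ⁅X, Y⁆ Z
  rw [hX, hY, hZ]
  simp only [hψ, lie_add, add_lie, lie_smul, smul_lie, br00, br01, br02, br03, br10, br11,
    br12, br13, br20, br21, br22, br23, br30, br31, br32, br33, smul_neg, smul_zero,
    map_add, map_smul, map_neg, map_zero, LinearMap.add_apply, LinearMap.smul_apply,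
    LinearMap.neg_apply, LinearMap.zero_apply, smul_eq_mul,
    c00, c01, c02, c03, c30, c31, c32, c33, h01, h02, h12, h13, h23, h33,
    h22, h03, h10, h20, h21, h31, h32, h30]
  ring
end
end

section
/- For every t ∈ ℂ with t ≠ 0, the 4-dimensional complex Lie algebra L_t with basis e₁,e₂,e₃,e₄ and nonzero brackets [e₂,e₃] = e₁ + t·e₄, [e₂,e₄] = e₂, [e₃,e₄] = e₂ − e₃ (together with anticommutativity, all other brackets of basis vectors zero) is a Lie algebra isomorphic to the direct product sl(2,ℂ) × ℂ. -/
/-! In `L_t` the vector `e₁` is central, and `x = e₂`, `y = t⁻¹(e₂ - 2e₃)`, `h = -2e₄ - 2t⁻¹e₁`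
satisfy `[x, y] = h`, `[h, x] = 2x`, `[h, y] = -2y`. Hence `L_t = span(x, y, h) ⊕ ℂe₁`, and sending
`x, y, h, e₁` to `(E, 0), (F, 0), (H, 0), (0, 1)` for the standard `sl₂`-triple `E, F, H` is an
isomorphism onto `sl(2, ℂ) × ℂ`; its inverse reads off the entries of a traceless matrix.
In the code the basis is indexed from `0`, so `e i` is `e_{i+1}`. -/

noncomputable section

/-- The direct product of two Lie rings. -/
instance prodLieRing (L₁ L₂ : Type*) [LieRing L₁] [LieRing L₂] : LieRing (L₁ × L₂) where
  bracket p q := (⁅p.1, q.1⁆, ⁅p.2, q.2⁆)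
  add_lie x y z := by
    show (⁅(x + y).1, z.1⁆, ⁅(x + y).2, z.2⁆) = _
    simp [add_lie, Prod.add_def]
  lie_add x y z := by
    show (⁅x.1, (y + z).1⁆, ⁅x.2, (y + z).2⁆) = _
    simp [lie_add, Prod.add_def]
  lie_self x := by
    show (⁅x.1, x.1⁆, ⁅x.2, x.2⁆) = 0
    simp
  leibniz_lie x y z := by
    show (⁅x.1, ⁅y.1, z.1⁆⁆, ⁅x.2, ⁅y.2, z.2⁆⁆) = _
    show _ = (⁅⁅x.1, y.1⁆, z.1⁆, ⁅⁅x.2, y.2⁆, z.2⁆) + (⁅y.1, ⁅x.1, z.1⁆⁆, ⁅y.2, ⁅x.2, z.2⁆⁆)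
    simp [Prod.add_def]

/-- The direct product of two complex Lie algebras. -/
instance prodLieAlgebra (L₁ L₂ : Type*) [LieRing L₁] [LieRing L₂]
    [LieAlgebra ℂ L₁] [LieAlgebra ℂ L₂] : LieAlgebra ℂ (L₁ × L₂) where
  lie_smul c x y := by
    show (⁅x.1, (c • y).1⁆, ⁅x.2, (c • y).2⁆) = c • (⁅x.1, y.1⁆, ⁅x.2, y.2⁆)
    simp [Prod.smul_def]

attribute [local instance 100] LieRing.ofAssociativeRing

open LieAlgebra.SpecialLinear

theorem Module.Basis.map_lie_of_map_lie_basis {ι R L L' : Type*} [CommRing R]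
    [LieRing L] [LieAlgebra R L] [LieRing L'] [LieAlgebra R L'] (b : Module.Basis ι R L)
    (f : L →ₗ[R] L') (h : ∀ i j, f ⁅b i, b j⁆ = ⁅f (b i), f (b j)⁆) (x y : L) :
    f ⁅x, y⁆ = ⁅f x, f y⁆ :=
  LinearMap.congr_fun₂ (LinearMap.ext_basis b b (B := (LieAlgebra.ad R L).toLinearMap.compr₂ f)
    (B' := (LieAlgebra.ad R L').toLinearMap.compl₁₂ f f) h) x y

section SlTwo

variable (R : Type*) [CommRing R]

def sl2E : sl (Fin 2) R := ⟨!![0, 1; 0, 0], by simp [sl, Matrix.trace_fin_two]⟩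
def sl2F : sl (Fin 2) R := ⟨!![0, 0; 1, 0], by simp [sl, Matrix.trace_fin_two]⟩
def sl2H : sl (Fin 2) R := ⟨!![1, 0; 0, -1], by simp [sl, Matrix.trace_fin_two]⟩

theorem isSl2Triple_sl2H_sl2E_sl2F [Nontrivial R] : IsSl2Triple (sl2H R) (sl2E R) (sl2F R) := by
  refine ⟨fun h ↦ by simpa [sl2H] using congrArg (fun A : sl (Fin 2) R ↦ A.1 0 0) h, ?_, ?_, ?_⟩ <;>
    ext i j <;> fin_cases i <;> fin_cases j <;> simp [sl2E, sl2F, sl2H, Ring.lie_def] <;> norm_num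

theorem eq_smul_sl2E_add_smul_sl2F_add_smul_sl2H (A : sl (Fin 2) R) :
    A = A.1 0 1 • sl2E R + A.1 1 0 • sl2F R + A.1 0 0 • sl2H R := by
  have htr : A.1 1 1 = -A.1 0 0 := by
    have : A.1.trace = 0 := A.2
    rw [Matrix.trace_fin_two] at this
    exact eq_neg_of_add_eq_zero_right this
  ext i j; fin_cases i <;> fin_cases j <;> simp [sl2E, sl2F, sl2H, htr]

end SlTwo

section

variable (t : ℂ) {L : Type*} [LieRing L] [LieAlgebra ℂ L] (e : Module.Basis (Fin 4) ℂ L)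

def toSl2Prod : L →ₗ[ℂ] sl (Fin 2) ℂ × ℂ :=
  e.constr ℂ ![(0, 1), (sl2E ℂ, 0), ((1 / 2 : ℂ) • sl2E ℂ - (t / 2) • sl2F ℂ, 0),
    ((-1 / 2 : ℂ) • sl2H ℂ, -1 / t)]

theorem toSl2Prod_basis (i : Fin 4) :
    toSl2Prod t e (e i) = ![(0, 1), (sl2E ℂ, 0), ((1 / 2 : ℂ) • sl2E ℂ - (t / 2) • sl2F ℂ, 0),
      ((-1 / 2 : ℂ) • sl2H ℂ, -1 / t)] i :=
  e.constr_basis ℂ _ i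

def ofSl2Prod : sl (Fin 2) ℂ × ℂ →ₗ[ℂ] L where
  toFun p := p.1.1 0 1 • e 1 + p.1.1 1 0 • (t⁻¹ • e 1 - (2 / t) • e 2)
    - p.1.1 0 0 • ((2 : ℂ) • e 3 + (2 / t) • e 0) + p.2 • e 0
  map_add' p q := by
    simp only [Prod.fst_add, Prod.snd_add, AddMemClass.coe_add, Matrix.add_apply]
    module
  map_smul' c p := by
    simp only [Prod.smul_fst, Prod.smul_snd, SetLike.val_smul, Matrix.smul_apply,
      smul_eq_mul, RingHom.id_apply]
    module

variable {t}

theorem toSl2Prod_comp_ofSl2Prod (ht : t ≠ 0) : toSl2Prod t e ∘ₗ ofSl2Prod t e = LinearMap.id := by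
  refine LinearMap.ext fun ⟨A, c⟩ ↦ ?_
  conv_rhs => rw [LinearMap.id_apply, eq_smul_sl2E_add_smul_sl2F_add_smul_sl2H ℂ A]
  ext1
  · simp [ofSl2Prod, toSl2Prod_basis]
    match_scalars <;> field_simp
    ring
  · simp [ofSl2Prod, toSl2Prod_basis]
    ring

theorem ofSl2Prod_comp_toSl2Prod (ht : t ≠ 0) : ofSl2Prod t e ∘ₗ toSl2Prod t e = LinearMap.id := by
  refine e.ext fun i ↦ ?_
  fin_cases i <;> simp [ofSl2Prod, toSl2Prod_basis, sl2E, sl2F, sl2H] <;>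
    match_scalars <;> field_simp <;> ring

theorem toSl2Prod_lie_basis (ht : t ≠ 0)
    (hbr : ∀ i j : Fin 4, ⁅e i, e j⁆ =
      if i = 1 ∧ j = 2 then e 0 + t • e 3 else if i = 2 ∧ j = 1 then -(e 0 + t • e 3)
      else if i = 1 ∧ j = 3 then e 1 else if i = 3 ∧ j = 1 then -e 1
      else if i = 2 ∧ j = 3 then e 1 - e 2 else if i = 3 ∧ j = 2 then e 2 - e 1
      else 0) (i j : Fin 4) :
    toSl2Prod t e ⁅e i, e j⁆ = ⁅toSl2Prod t e (e i), toSl2Prod t e (e j)⁆ := by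
  have hsl := isSl2Triple_sl2H_sl2E_sl2F ℂ
  rw [hbr]
  fin_cases i <;> fin_cases j <;> ext1 <;>
    simp [toSl2Prod_basis, hsl.lie_e_f, hsl.lie_h_e_smul ℂ, hsl.lie_lie_smul_f ℂ,
      ← lie_skew (sl2E ℂ) (sl2H ℂ), ← lie_skew (sl2F ℂ) (sl2H ℂ), ← lie_skew (sl2F ℂ) (sl2E ℂ),
      fun a b : ℂ ↦ (Commute.all a b).lie_eq] <;>
    first | module | (field_simp; ring)

end

/-- For every `t ≠ 0`, the 4-dimensional complex Lie algebra with basis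
`e₁,…,e₄` and nonzero brackets `[e₂,e₃] = e₁ + t·e₄`, `[e₂,e₄] = e₂`,
`[e₃,e₄] = e₂ − e₃` (written 0-indexed below) is isomorphic to `sl(2,ℂ) × ℂ`. -/
theorem stmt18 (t : ℂ) (ht : t ≠ 0) (L : Type*) [LieRing L] [LieAlgebra ℂ L]
    (e : Module.Basis (Fin 4) ℂ L)
    (hbr : ∀ i j : Fin 4, ⁅e i, e j⁆ =
      if i = 1 ∧ j = 2 then e 0 + t • e 3 else if i = 2 ∧ j = 1 then -(e 0 + t • e 3)
      else if i = 1 ∧ j = 3 then e 1 else if i = 3 ∧ j = 1 then -e 1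
      else if i = 2 ∧ j = 3 then e 1 - e 2 else if i = 3 ∧ j = 2 then e 2 - e 1
      else 0) :
    Nonempty (L ≃ₗ⁅ℂ⁆ (↥(LieAlgebra.SpecialLinear.sl (Fin 2) ℂ) × ℂ)) :=
  ⟨{ toLinearMap := toSl2Prod t e
     map_lie' := e.map_lie_of_map_lie_basis _ (toSl2Prod_lie_basis e ht hbr) _ _
     invFun := ofSl2Prod t e
     left_inv := LinearMap.congr_fun (ofSl2Prod_comp_toSl2Prod e ht)
     right_inv := LinearMap.congr_fun (toSl2Prod_comp_ofSl2Prod e ht) }⟩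
end
end
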